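/- arXiv:1909.06334 — 2 statements merged into one kernel-verified Lean document; each statement's English description precedes it below -/
import Mathlib

section
/- For each fixed integer k ≥ 1, lim_{N→∞} ∫_{(−√N,∞)^k} ∏_{j=1}^k exp(−√N t_j + N log(1 + t_j/√N)) Δ(t)² dt = ∫_{ℝ^k} ∏_{j=1}^k e^{−t_j²/2} Δ(t)² dt, where N → ∞ through the positive integers. -/
/-!
With `s = √N`, the integrand's weight is `exp (φ s x)` for `φ s x = -s x + s² log (1 + x / s)`.
Expanding the logarithm to second order gives `φ s x → -x² / 2` as `s → ∞`. The tangent-line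
bound `log y ≤ c y + c⁻¹ - 2`, taken at `c = 1 ± 1 / (2 s)`, gives `φ s x ≤ 1/2 - |x|/2` for all
`s ≥ 1`, and `Δ(t)²` is bounded by a polynomial in the `|t j|`, so dominated convergence applies.
-/

open MeasureTheory Real Complex Filter

/-- Vandermonde product `∏_{i<j} (t j - t i)` for a real vector. -/
noncomputable def vandermonde {k : ℕ} (t : Fin k → ℝ) : ℝ :=
  ∏ i : Fin k, ∏ j ∈ Finset.Ioi i, (t j - t i)

noncomputable def laguerreExponent (s x : ℝ) : ℝ :=
  -s * x + s ^ 2 * Real.log (1 + x / s)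

lemma laguerreExponent_le_mul_add {s x a : ℝ} (hs : 0 < s) (hx : -s < x) (ha : -s < a) :
    laguerreExponent s x ≤ a * x + a ^ 2 * s / (s + a) := by
  have one_add_div_pos : ∀ y, -s < y → 0 < 1 + y / s := fun y hy => by
    have : -1 < y / s := by rw [lt_div_iff₀ hs]; linarith
    linarith
  have hc := one_add_div_pos a ha
  have hy := one_add_div_pos x hx
  have key : Real.log (1 + x / s) ≤ (1 + a / s) * (1 + x / s) + (1 + a / s)⁻¹ - 2 := by
    have h1 := Real.log_le_sub_one_of_pos (mul_pos hc hy)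
    have h2 := Real.log_le_sub_one_of_pos (inv_pos.2 hc)
    rw [Real.log_mul hc.ne' hy.ne'] at h1
    rw [Real.log_inv] at h2
    linarith
  have hsa : s + a ≠ 0 := by linarith
  calc laguerreExponent s x
      ≤ -s * x + s ^ 2 * ((1 + a / s) * (1 + x / s) + (1 + a / s)⁻¹ - 2) := by
        unfold laguerreExponent; gcongr
    _ = a * x + a ^ 2 * s / (s + a) := by field_simp; ring

lemma laguerreExponent_le_half_sub_abs {s x : ℝ} (hs : 1 ≤ s) (hx : -s < x) :
    laguerreExponent s x ≤ 1 / 2 - |x| / 2 := by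
  have hs0 : 0 < s := by linarith
  have hpos := laguerreExponent_le_mul_add hs0 hx (a := 1 / 2) (by linarith)
  have hneg := laguerreExponent_le_mul_add hs0 hx (a := -1 / 2) (by linarith)
  have epos : (1 / 2) ^ 2 * s / (s + 1 / 2) ≤ 1 / 2 := by
    rw [div_le_iff₀ (by linarith)]; linarith
  have eneg : (-1 / 2) ^ 2 * s / (s + -1 / 2) ≤ 1 / 2 := by
    rw [div_le_iff₀ (by linarith)]; linarith
  rcases abs_cases x with ⟨hx', -⟩ | ⟨hx', -⟩ <;> rw [hx'] <;> linarith

lemma abs_laguerreExponent_add_sq_div_two_le {s x : ℝ} (h : |x| < s) :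
    |laguerreExponent s x + x ^ 2 / 2| ≤ |x| ^ 3 / (s - |x|) := by
  have hs : 0 < s := (abs_nonneg x).trans_lt h
  have hu : |-(x / s)| < 1 := by rwa [abs_neg, abs_div, abs_of_pos hs, div_lt_one hs]
  have key := Real.abs_log_sub_add_sum_range_le hu 2
  have hsum : ∑ i ∈ Finset.range 2, (-(x / s)) ^ (i + 1) / (i + 1) + Real.log (1 - -(x / s)) =
      (laguerreExponent s x + x ^ 2 / 2) / s ^ 2 := by
    rw [eq_div_iff (pow_pos hs 2).ne', laguerreExponent]
    norm_num [Finset.sum_range_succ]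
    field_simp
    ring
  rw [hsum, abs_div, abs_neg, abs_div, abs_of_pos hs, abs_of_pos (pow_pos hs 2),
    div_le_iff₀ (pow_pos hs 2)] at key
  norm_num at key
  have hsx : 0 < s - |x| := sub_pos.2 h
  calc _ ≤ (|x| / s) ^ 3 / (1 - |x| / s) * s ^ 2 := key
    _ = |x| ^ 3 / (s - |x|) := by field_simp

lemma tendsto_laguerreExponent_atTop (x : ℝ) :
    Tendsto (fun s => laguerreExponent s x) atTop (nhds (-x ^ 2 / 2)) := by
  rw [tendsto_iff_norm_sub_tendsto_zero]
  refine squeeze_zero' (g := fun s => |x| ^ 3 / (s - |x|))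
    (Eventually.of_forall fun _ => norm_nonneg _) ?_
    (tendsto_const_nhds.div_atTop (tendsto_atTop_add_const_right _ (-|x|) tendsto_id))
  filter_upwards [eventually_gt_atTop |x|] with s hs
  simpa [neg_div, ← sub_eq_add_neg] using abs_laguerreExponent_add_sq_div_two_le hs

lemma integrable_exp_neg_mul_abs {c : ℝ} (hc : 0 < c) :
    Integrable fun x : ℝ => Real.exp (-(c * |x|)) := by
  rw [← integrableOn_univ, ← Set.Iic_union_Ioi (a := 0)]
  refine IntegrableOn.union ?_ ?_
  · refine (integrableOn_exp_mul_Iic hc 0).congr_fun (fun x hx => ?_) measurableSet_Iic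
    rw [abs_of_nonpos hx, mul_neg, neg_neg]
  · refine (integrableOn_exp_mul_Ioi (neg_lt_zero.2 hc) 0).congr_fun (fun x hx => ?_)
      measurableSet_Ioi
    simp only [abs_of_pos (show 0 < x from hx), neg_mul]

open Nat in
lemma integrable_exp_neg_mul_abs_mul_one_add_abs_pow {c : ℝ} (hc : 0 < c) (m : ℕ) :
    Integrable fun x : ℝ => Real.exp (-(c * |x|)) * (1 + |x|) ^ m := by
  refine ((integrable_exp_neg_mul_abs (half_pos hc)).const_mul
    (m ! * (2 / c) ^ m * Real.exp (c / 2))).mono' (by fun_prop) (ae_of_all _ fun x => ?_)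
  have hpow : (1 + |x|) ^ m ≤ m ! * (2 / c) ^ m * Real.exp (c * (1 + |x|) / 2) := by
    have h := Real.pow_div_factorial_le_exp _ (by positivity : 0 ≤ c * (1 + |x|) / 2) m
    rw [div_le_iff₀ (by positivity)] at h
    calc (1 + |x|) ^ m = (2 / c) ^ m * (c * (1 + |x|) / 2) ^ m := by
          rw [← mul_pow]; field_simp
      _ ≤ (2 / c) ^ m * (Real.exp (c * (1 + |x|) / 2) * m !) := by gcongr
      _ = _ := by ring
  rw [Real.norm_of_nonneg (by positivity)]
  calc Real.exp (-(c * |x|)) * (1 + |x|) ^ m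
      ≤ Real.exp (-(c * |x|)) * (m ! * (2 / c) ^ m * Real.exp (c * (1 + |x|) / 2)) := by gcongr
    _ = m ! * (2 / c) ^ m * (Real.exp (-(c * |x|)) * Real.exp (c * (1 + |x|) / 2)) := by ring
    _ = m ! * (2 / c) ^ m * (Real.exp (c / 2) * Real.exp (-(c / 2 * |x|))) := by
        rw [← Real.exp_add, ← Real.exp_add]; ring_nf
    _ = _ := by ring

@[fun_prop]
lemma continuous_vandermonde (k : ℕ) : Continuous (vandermonde : (Fin k → ℝ) → ℝ) := by
  unfold vandermonde
  fun_prop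

lemma abs_vandermonde_le {k : ℕ} (t : Fin k → ℝ) :
    |vandermonde t| ≤ (∏ j, (1 + |t j|)) ^ (k * k) := by
  set P := ∏ j, (1 + |t j|)
  have one_le : ∀ j, 1 ≤ 1 + |t j| := fun j => le_add_of_nonneg_right (abs_nonneg _)
  have hP : 1 ≤ P := Finset.one_le_prod fun j _ => one_le j
  have hdiff : ∀ i j, i ≠ j → |t j - t i| ≤ P := fun i j hij =>
    calc |t j - t i| ≤ (1 + |t i|) * (1 + |t j|) := by
          nlinarith [abs_sub (t j) (t i), abs_nonneg (t i), abs_nonneg (t j)]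
      _ = ∏ m ∈ {i, j}, (1 + |t m|) := (Finset.prod_pair (f := fun m => 1 + |t m|) hij).symm
      _ ≤ P := Finset.prod_le_prod_of_subset_of_one_le (Finset.subset_univ _)
          (fun m _ => zero_le_one.trans (one_le m)) (fun m _ _ => one_le m)
  rw [vandermonde, Finset.abs_prod]
  calc ∏ i, |∏ j ∈ Finset.Ioi i, (t j - t i)| ≤ ∏ _i : Fin k, P ^ k := by
        gcongr with i
        rw [Finset.abs_prod]
        calc ∏ j ∈ Finset.Ioi i, |t j - t i| ≤ ∏ _j ∈ Finset.Ioi i, P :=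
              Finset.prod_le_prod (fun _ _ => abs_nonneg _)
                (fun j hj => hdiff i j (Finset.mem_Ioi.1 hj).ne)
          _ = P ^ (Finset.Ioi i).card := Finset.prod_const _
          _ ≤ P ^ k := pow_le_pow_right₀ hP
              ((Finset.card_le_univ _).trans_eq (Fintype.card_fin k))
    _ = P ^ (k * k) := by rw [Finset.prod_const, Finset.card_univ, Fintype.card_fin, ← pow_mul]

lemma vandermonde_sq_le {k : ℕ} (t : Fin k → ℝ) :
    vandermonde t ^ 2 ≤ ∏ j, (1 + |t j|) ^ (2 * (k * k)) := by
  calc vandermonde t ^ 2 = |vandermonde t| ^ 2 := (sq_abs _).symm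
    _ ≤ ((∏ j, (1 + |t j|)) ^ (k * k)) ^ 2 := by gcongr; exact abs_vandermonde_le t
    _ = _ := by rw [← pow_mul, Finset.prod_pow, mul_comm]

lemma prod_exp_laguerreExponent_mul_vandermonde_sq_le {k : ℕ} {s : ℝ} (hs : 1 ≤ s)
    {t : Fin k → ℝ} (ht : ∀ j, -s < t j) :
    (∏ j, Real.exp (laguerreExponent s (t j))) * vandermonde t ^ 2 ≤
      ∏ j, Real.exp (1 / 2 - |t j| / 2) * (1 + |t j|) ^ (2 * (k * k)) := by
  rw [Finset.prod_mul_distrib]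
  gcongr with j
  · exact laguerreExponent_le_half_sub_abs hs (ht j)
  · exact vandermonde_sq_le t

theorem tendsto_setIntegral_laguerre (k : ℕ) :
    Tendsto (fun s : ℝ => ∫ t in Set.univ.pi fun _ : Fin k => Set.Ioi (-s),
        (∏ j, Real.exp (laguerreExponent s (t j))) * vandermonde t ^ 2) atTop
      (nhds (∫ t : Fin k → ℝ, (∏ j, Real.exp (-(t j) ^ 2 / 2)) * vandermonde t ^ 2)) := by
  have hS : ∀ s : ℝ, MeasurableSet (Set.univ.pi fun _ : Fin k => Set.Ioi (-s)) :=
    fun s => MeasurableSet.univ_pi fun _ => measurableSet_Ioi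
  simp_rw [← integral_indicator (hS _)]
  refine tendsto_integral_filter_of_dominated_convergence
    (fun t => ∏ j, Real.exp (1 / 2 - |t j| / 2) * (1 + |t j|) ^ (2 * (k * k))) ?_ ?_ ?_ ?_
  · exact Eventually.of_forall fun s =>
      (Measurable.aestronglyMeasurable (by unfold laguerreExponent; fun_prop)).indicator (hS s)
  · filter_upwards [eventually_ge_atTop 1] with s hs
    refine ae_of_all _ fun t => ?_
    by_cases ht : t ∈ Set.univ.pi fun _ : Fin k => Set.Ioi (-s)
    · rw [Set.indicator_of_mem ht, Real.norm_of_nonneg (by positivity)]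
      exact prod_exp_laguerreExponent_mul_vandermonde_sq_le hs (Set.mem_univ_pi.1 ht)
    · rw [Set.indicator_of_notMem ht, norm_zero]
      positivity
  · refine Integrable.fintype_prod (μ := fun _ => volume)
      (f := fun _ x => Real.exp (1 / 2 - |x| / 2) * (1 + |x|) ^ (2 * (k * k))) fun _ => ?_
    refine ((integrable_exp_neg_mul_abs_mul_one_add_abs_pow one_half_pos (2 * (k * k))).const_mul
      (Real.exp (1 / 2))).congr (ae_of_all _ fun x => ?_)
    dsimp only
    rw [← mul_assoc, ← Real.exp_add]
    ring_nf
  · refine ae_of_all _ fun t => ?_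
    have hmem : ∀ᶠ s in atTop, t ∈ Set.univ.pi fun _ : Fin k => Set.Ioi (-s) := by
      simp only [Set.mem_univ_pi, Set.mem_Ioi, eventually_all]
      exact fun j => (eventually_gt_atTop (-t j)).mono fun s hs => by linarith
    refine Tendsto.congr' (hmem.mono fun s hs => (Set.indicator_of_mem hs _).symm) ?_
    exact (tendsto_finsetProd _ fun j _ => (Real.continuous_exp.tendsto _).comp
      (tendsto_laguerreExponent_atTop (t j))).mul_const _

theorem stmt_3_general (k : ℕ) :
    Filter.Tendsto
      (fun N : ℕ =>
        ∫ t in Set.univ.pi fun _ : Fin k => Set.Ioi (-Real.sqrt N),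
          (∏ j, Real.exp (-Real.sqrt N * t j + N * Real.log (1 + t j / Real.sqrt N))) *
            vandermonde t ^ 2)
      Filter.atTop
      (nhds (∫ t : Fin k → ℝ, (∏ j, Real.exp (-(t j) ^ 2 / 2)) * vandermonde t ^ 2)) := by
  have hN : Tendsto (fun N : ℕ => Real.sqrt N) atTop atTop :=
    tendsto_sqrt_atTop.comp tendsto_natCast_atTop_atTop
  refine ((tendsto_setIntegral_laguerre k).comp hN).congr fun N => ?_
  simp only [Function.comp, laguerreExponent, Real.sq_sqrt (Nat.cast_nonneg N)]

/-- convergence of the rescaled Laguerre-type integral over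
`(-√N,∞)^k` to the Gaussian (GUE) Selberg integral, as `N → ∞` through ℕ. -/
theorem stmt_3 (k : ℕ) (hk : 1 ≤ k) :
    Filter.Tendsto
      (fun N : ℕ =>
        ∫ t in Set.univ.pi fun _ : Fin k => Set.Ioi (-Real.sqrt N),
          (∏ j, Real.exp (-Real.sqrt N * t j + N * Real.log (1 + t j / Real.sqrt N))) *
            vandermonde t ^ 2)
      Filter.atTop
      (nhds (∫ t : Fin k → ℝ, (∏ j, Real.exp (-(t j) ^ 2 / 2)) * vandermonde t ^ 2)) :=
  stmt_3_general k
end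

section
/- Let k ≥ 1 be an integer, let A : ℂ × ℂ → ℂ be analytic on a product of open neighborhoods of x ∈ ℂ and y ∈ ℂ, and for vectors x⃗ = (x₁,…,x_k) and y⃗ = (y₁,…,y_k) with pairwise distinct coordinates define Q(x⃗,y⃗) := det{ A(x_i, y_j) }_{i,j=1}^k / (Δ(x⃗)Δ(y⃗)). Then as (x⃗,y⃗) → ((x,…,x),(y,…,y)) through configurations with pairwise distinct coordinates, Q(x⃗,y⃗) converges to ( ∏_{j=0}^{k−1} (j!)^{−2} ) · det{ ∂^{i+j−2} A / ∂x^{i−1} ∂y^{j−1} (x,y) }_{i,j=1}^k. -/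
open MeasureTheory Real Complex Filter

/-- Vandermonde product for a complex vector. -/
noncomputable def vandermondeC {k : ℕ} (t : Fin k → ℂ) : ℂ :=
  ∏ i : Fin k, ∏ j ∈ Finset.Ioi i, (t j - t i)

open Finset Metric Matrix Topology

/-!
For nodes `t` in the disc `|z - c| < R`, the normalised Cauchy integral
`(2πi)⁻¹ ∮ f(z) ∏_{m ≤ i} (z - t m)⁻¹ dz` is the divided difference `f[t 0, …, t i]` when the
nodes are distinct (partial fractions plus Cauchy's formula), is `f⁽ⁱ⁾(c) / i!` when every node
equals `c`, and depends continuously on the nodes. Taking it in both variables of `A` gives a matrix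
`F(x⃗, y⃗)` that is continuous in the nodes and, for distinct nodes, factors as
`L(x⃗) [A(x_i, y_j)] L(y⃗)ᵀ` with `L` lower triangular of determinant `1/Δ`. So `det F` is the
quotient `Q` off the diagonal, and the limit is `det F` at the merged point, that is
`∏ (j!)⁻² det[∂ⁱ∂ʲA(x, y)]`.
-/

theorem Lagrange.prod_inv_sub_eq_sum_nodalWeight_mul_inv_sub {F ι : Type*} [Field F]
    [DecidableEq ι] {s : Finset ι} {v : ι → F} {x : F} (hvs : Set.InjOn v s) (hs : s.Nonempty)
    (hx : ∀ i ∈ s, x ≠ v i) :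
    ∏ i ∈ s, (x - v i)⁻¹ = ∑ i ∈ s, nodalWeight s v i * (x - v i)⁻¹ := by
  have h := eval_interpolate_not_at_node 1 hx
  rw [interpolate_one hvs hs, Polynomial.eval_one, eval_nodal] at h
  simp only [Pi.one_apply, mul_one] at h
  rw [prod_inv_distrib]
  exact inv_eq_of_mul_eq_one_right h.symm

section PartialDerivative

variable {𝕜 X E : Type*} [NontriviallyNormedField 𝕜] [NormedAddCommGroup X] [NormedSpace 𝕜 X]
  [NormedAddCommGroup E] [NormedSpace 𝕜 E] [CompleteSpace E] {A : X × 𝕜 → E}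

theorem AnalyticOnNhd.iteratedDeriv_right {W : Set (X × 𝕜)} (hW : IsOpen W)
    (hA : AnalyticOnNhd 𝕜 A W) (j : ℕ) :
    AnalyticOnNhd 𝕜 (fun p => iteratedDeriv j (fun b => A (p.1, b)) p.2) W := by
  induction j with
  | zero => simpa using hA
  | succ j ih =>
    refine ((ContinuousLinearMap.apply 𝕜 E ((0 : X), (1 : 𝕜))).comp_analyticOnNhd
      ih.fderiv).congr hW fun p hp => ?_
    have hslice : HasDerivAt (fun b => ((p.1, b) : X × 𝕜)) ((0 : X), (1 : 𝕜)) p.2 :=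
      (hasDerivAt_const _ _).prodMk (hasDerivAt_id _)
    rw [iteratedDeriv_succ]
    exact (((ih p hp).differentiableAt.hasFDerivAt.comp_hasDerivAt p.2 hslice).deriv).symm

theorem AnalyticAt.iteratedDeriv_right {p : X × 𝕜} (hA : AnalyticAt 𝕜 A p) (j : ℕ) :
    AnalyticAt 𝕜 (fun q => iteratedDeriv j (fun b => A (q.1, b)) q.2) p :=
  AnalyticOnNhd.iteratedDeriv_right (isOpen_analyticAt 𝕜 A) (fun _ h => h) j p hA

end PartialDerivative

section Slices

variable {𝕜 X Y E : Type*} [NontriviallyNormedField 𝕜] [NormedAddCommGroup X] [NormedSpace 𝕜 X]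
  [NormedAddCommGroup Y] [NormedSpace 𝕜 Y] [NormedAddCommGroup E] [NormedSpace 𝕜 E]
  {A : X × Y → E} {s : Set X} {t : Set Y}

theorem AnalyticOnNhd.differentiableOn_left (hA : AnalyticOnNhd 𝕜 A (s ×ˢ t)) {b : Y}
    (hb : b ∈ t) :
    DifferentiableOn 𝕜 (fun a => A (a, b)) s := fun a ha =>
  (hA (a, b) ⟨ha, hb⟩).curry_left.differentiableAt.differentiableWithinAt

theorem AnalyticOnNhd.differentiableOn_right (hA : AnalyticOnNhd 𝕜 A (s ×ˢ t)) {a : X}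
    (ha : a ∈ s) :
    DifferentiableOn 𝕜 (fun b => A (a, b)) t := fun b hb =>
  (hA (a, b) ⟨ha, hb⟩).curry_right.differentiableAt.differentiableWithinAt

end Slices

noncomputable def circleDividedDiff {ι : Type*} (c : ℂ) (R : ℝ) (f : ℂ → ℂ) (t : ι → ℂ)
    (s : Finset ι) : ℂ :=
  (2 * π * I)⁻¹ * ∮ z in C(c, R), (∏ m ∈ s, (z - t m)⁻¹) * f z

section CircleDividedDiff

variable {ι : Type*} {c : ℂ} {R : ℝ} {f : ℂ → ℂ}

theorem circleDividedDiff_congr {g : ℂ → ℂ} (hR : 0 ≤ R) (hfg : Set.EqOn f g (sphere c R))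
    (t : ι → ℂ) (s : Finset ι) : circleDividedDiff c R f t s = circleDividedDiff c R g t s := by
  rw [circleDividedDiff, circleDividedDiff,
    circleIntegral.integral_congr hR fun z hz => congrArg _ (hfg hz)]

theorem circleDividedDiff_eq_sum_nodalWeight [DecidableEq ι]
    (hf : DifferentiableOn ℂ f (closedBall c R)) {t : ι → ℂ} {s : Finset ι} (ht : Set.InjOn t s)
    (hs : s.Nonempty) (hball : ∀ m ∈ s, t m ∈ ball c R) :
    circleDividedDiff c R f t s = ∑ m ∈ s, Lagrange.nodalWeight s t m * f (t m) := by
  have hR : 0 < R := pos_of_mem_ball (hball _ hs.choose_spec)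
  have hne : ∀ z ∈ sphere c R, ∀ m ∈ s, z ≠ t m := fun z hz m hm =>
    sphere_disjoint_ball.ne_of_mem hz (hball m hm)
  have hpf : Set.EqOn (fun z => (∏ m ∈ s, (z - t m)⁻¹) * f z)
      (fun z => ∑ m ∈ s, Lagrange.nodalWeight s t m * ((z - t m)⁻¹ * f z)) (sphere c R) := by
    intro z hz
    simp only [Lagrange.prod_inv_sub_eq_sum_nodalWeight_mul_inv_sub ht hs (hne z hz), sum_mul,
      mul_assoc]
  have hint : ∀ m ∈ s,
      CircleIntegrable (fun z => Lagrange.nodalWeight s t m * ((z - t m)⁻¹ * f z)) c R :=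
    fun m hm => (continuousOn_const.mul ((ContinuousOn.inv₀ (f := fun z => z - t m) (by fun_prop)
      fun z hz => sub_ne_zero.mpr (hne z hz m hm)).mul
      (hf.continuousOn.mono sphere_subset_closedBall))).circleIntegrable hR.le
  rw [circleDividedDiff, circleIntegral.integral_congr hR.le hpf,
    circleIntegral.integral_fun_sum hint, mul_sum]
  refine sum_congr rfl fun m hm => ?_
  have hcauchy := hf.circleIntegral_sub_inv_smul (hball m hm)
  simp only [smul_eq_mul] at hcauchy
  rw [circleIntegral.integral_const_mul, hcauchy]
  field_simp

theorem circleDividedDiff_const (hR : 0 < R) (hf : DifferentiableOn ℂ f (closedBall c R))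
    {s : Finset ι} {n : ℕ} (hs : #s = n + 1) :
    circleDividedDiff c R f (fun _ => c) s = iteratedDeriv n f c / n.factorial := by
  have h := hf.circleIntegral_one_div_sub_center_pow_smul hR n
  simp only [smul_eq_mul, one_div, ← inv_pow] at h
  simp only [circleDividedDiff, prod_const, hs, h]
  field_simp

theorem continuousOn_circleDividedDiff {X : Type*} [TopologicalSpace X] (hR : 0 ≤ R)
    {f : X → ℂ → ℂ} {u : Set X} (hf : ContinuousOn (fun q : X × ℂ => f q.1 q.2) (u ×ˢ sphere c R))
    (s : Finset ι) :
    ContinuousOn (fun q : (ι → ℂ) × X => circleDividedDiff c R (f q.2) q.1 s)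
      ((Set.univ.pi fun _ => ball c R) ×ˢ u) := by
  set Ω : Set ((ι → ℂ) × X) := (Set.univ.pi fun _ => ball c R) ×ˢ u
  rw [continuousOn_iff_continuous_domRestrict]
  refine continuous_const.mul ?_
  simp only [circleIntegral, deriv_circleMap]
  refine intervalIntegral.continuous_parametric_intervalIntegral_of_continuous' ?_ _ _
  have hsphere (θ : ℝ) : circleMap c R θ ∈ sphere c R := circleMap_mem_sphere c hR θ
  simp only [Function.uncurry_def]
  refine Continuous.fun_smul (by fun_prop) (Continuous.fun_mul ?_ ?_)
  · refine continuous_finsetProd _ fun m _ => Continuous.inv₀ (by fun_prop) fun q => ?_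
    exact sub_ne_zero.mpr (sphere_disjoint_ball.ne_of_mem (hsphere q.2) (q.1.2.1 m trivial))
  · refine hf.comp_continuous (f := fun q : Ω × ℝ => (q.1.1.2, circleMap c R q.2))
      (by fun_prop) ?_
    rintro ⟨⟨_, -, hq⟩, θ⟩
    exact ⟨hq, hsphere θ⟩

end CircleDividedDiff

/-- Row `i` holds the weights of the divided difference on the nodes `t 0, …, t i`. -/
noncomputable def nodalWeightMatrix {F : Type*} [Field F] {k : ℕ} (t : Fin k → F) :
    Matrix (Fin k) (Fin k) F :=
  Matrix.of fun i m => if m ≤ i then Lagrange.nodalWeight (Iic i) t m else 0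

section NodalWeightMatrix

variable {F : Type*} [Field F] {k : ℕ}

theorem nodalWeightMatrix_mulVec_apply (t g : Fin k → F) (i : Fin k) :
    (nodalWeightMatrix t *ᵥ g) i = ∑ m ∈ Iic i, Lagrange.nodalWeight (Iic i) t m * g m := by
  simp only [mulVec, dotProduct, nodalWeightMatrix, of_apply, ite_mul, zero_mul,
    ← sum_filter, filter_ge_eq_Iic]

theorem det_nodalWeightMatrix (t : Fin k → F) :
    (nodalWeightMatrix t).det = (∏ i, ∏ j ∈ Ioi i, (t j - t i))⁻¹ := by
  rw [det_of_isLowerTriangular (nodalWeightMatrix t) fun i m h => if_neg (not_le.mpr h),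
    prod_comm' (s' := fun j => Iio j) (t' := univ) (by simp [and_comm]), ← prod_inv_distrib]
  refine prod_congr rfl fun i _ => ?_
  simp [nodalWeightMatrix, Lagrange.nodalWeight, Iic_erase, prod_inv_distrib]

theorem circleDividedDiff_Iic_eq_mulVec {c : ℂ} {R : ℝ} {f : ℂ → ℂ}
    (hf : DifferentiableOn ℂ f (closedBall c R)) {t : Fin k → ℂ} (ht : Function.Injective t)
    (hball : ∀ m, t m ∈ ball c R) (i : Fin k) :
    circleDividedDiff c R f t (Iic i) = (nodalWeightMatrix t *ᵥ (f ∘ t)) i := by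
  rw [circleDividedDiff_eq_sum_nodalWeight hf ht.injOn ⟨i, mem_Iic.mpr le_rfl⟩ fun m _ => hball m,
    nodalWeightMatrix_mulVec_apply]
  rfl

end NodalWeightMatrix

noncomputable def circleDividedDiffMatrix {k : ℕ} (A : ℂ × ℂ → ℂ) (x y : ℂ) (r : ℝ)
    (p : (Fin k → ℂ) × (Fin k → ℂ)) : Matrix (Fin k) (Fin k) ℂ :=
  Matrix.of fun i j => circleDividedDiff x r
    (fun z => circleDividedDiff y r (fun w => A (z, w)) p.2 (Iic j)) p.1 (Iic i)

section CircleDividedDiffMatrix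

variable {k : ℕ} {A : ℂ × ℂ → ℂ} {x y : ℂ} {r : ℝ}

theorem circleDividedDiffMatrix_eq_mul
    (hA : AnalyticOnNhd ℂ A (closedBall x r ×ˢ closedBall y r)) {p : (Fin k → ℂ) × (Fin k → ℂ)}
    (hp : p ∈ (Set.univ.pi fun _ => ball x r) ×ˢ (Set.univ.pi fun _ => ball y r))
    (h₁ : Function.Injective p.1) (h₂ : Function.Injective p.2) :
    circleDividedDiffMatrix A x y r p =
      nodalWeightMatrix p.1 * Matrix.of (fun i j => A (p.1 i, p.2 j)) *
        (nodalWeightMatrix p.2)ᵀ := by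
  have hx : ∀ m, p.1 m ∈ ball x r := fun m => hp.1 m trivial
  have hy : ∀ n, p.2 n ∈ ball y r := fun n => hp.2 n trivial
  have hinner (j : Fin k) : Set.EqOn
      (fun z => circleDividedDiff y r (fun w => A (z, w)) p.2 (Iic j))
      (fun z => (nodalWeightMatrix p.2 *ᵥ fun n => A (z, p.2 n)) j) (closedBall x r) :=
    fun z hz => circleDividedDiff_Iic_eq_mulVec (hA.differentiableOn_right hz) h₂ hy j
  ext i j
  rw [circleDividedDiffMatrix, of_apply,
    circleDividedDiff_congr (pos_of_mem_ball (hx i)).le ((hinner j).mono sphere_subset_closedBall),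
    circleDividedDiff_Iic_eq_mulVec _ h₁ hx i]
  · simp only [mulVec, dotProduct, mul_apply, transpose_apply, of_apply,
      Function.comp_apply, mul_sum, sum_mul]
    rw [sum_comm]
    exact sum_congr rfl fun m _ => sum_congr rfl fun n _ => by ring
  · simp only [mulVec, dotProduct]
    exact .fun_sum fun n _ =>
      (hA.differentiableOn_left (ball_subset_closedBall (hy n))).const_mul _

theorem circleDividedDiffMatrix_const_apply
    (hA : AnalyticOnNhd ℂ A (closedBall x r ×ˢ closedBall y r)) (hr : 0 < r) (i j : Fin k) :
    circleDividedDiffMatrix A x y r ((fun _ => x), (fun _ => y)) i j =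
      iteratedDeriv i (fun a => iteratedDeriv j (fun b => A (a, b)) y) x / (i : ℕ).factorial /
        (j : ℕ).factorial := by
  have hy : y ∈ closedBall y r := mem_closedBall_self hr.le
  have hG : DifferentiableOn ℂ (fun a => iteratedDeriv j (fun b => A (a, b)) y) (closedBall x r) :=
    fun a ha => ((hA (a, y) ⟨ha, hy⟩).iteratedDeriv_right j).curry_left
      |>.differentiableAt.differentiableWithinAt
  have hinner : Set.EqOn (fun z => circleDividedDiff y r (fun w => A (z, w)) (fun _ => y) (Iic j))
      (fun z => iteratedDeriv j (fun b => A (z, b)) y / (j : ℕ).factorial) (closedBall x r) :=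
    fun z hz => circleDividedDiff_const hr (hA.differentiableOn_right hz) (Fin.card_Iic j)
  rw [circleDividedDiffMatrix, of_apply,
    circleDividedDiff_congr hr.le (hinner.mono sphere_subset_closedBall),
    circleDividedDiff_const hr (hG.div_const _) (Fin.card_Iic i), iteratedDeriv_div_const,
    div_right_comm]

theorem det_circleDividedDiffMatrix_const
    (hA : AnalyticOnNhd ℂ A (closedBall x r ×ˢ closedBall y r)) (hr : 0 < r) :
    (circleDividedDiffMatrix (k := k) A x y r ((fun _ => x), (fun _ => y))).det =
      (∏ j : Fin k, (((j : ℕ).factorial : ℂ) ^ 2)⁻¹) *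
        (Matrix.of fun i j : Fin k =>
          iteratedDeriv i (fun a => iteratedDeriv j (fun b => A (a, b)) y) x).det := by
  set v : Fin k → ℂ := fun i => ((i : ℕ).factorial : ℂ)⁻¹
  have h : circleDividedDiffMatrix A x y r ((fun _ => x), (fun _ => y)) =
      diagonal v * Matrix.of (fun i j : Fin k =>
        iteratedDeriv i (fun a => iteratedDeriv j (fun b => A (a, b)) y) x) * diagonal v := by
    ext i j
    rw [circleDividedDiffMatrix_const_apply hA hr, mul_diagonal, diagonal_mul, of_apply]
    simp only [v, div_eq_mul_inv]
    ring
  rw [h, det_mul, det_mul, det_diagonal, mul_right_comm, ← sq, ← prod_pow]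
  simp only [v, inv_pow]

theorem continuousOn_circleDividedDiffMatrix
    (hA : AnalyticOnNhd ℂ A (closedBall x r ×ˢ closedBall y r)) (hr : 0 ≤ r) :
    ContinuousOn (circleDividedDiffMatrix (k := k) A x y r)
      ((Set.univ.pi fun _ => ball x r) ×ˢ (Set.univ.pi fun _ => ball y r)) := by
  have hinner (j : Fin k) := continuousOn_circleDividedDiff hr (f := fun z w => A (z, w))
    (hA.continuousOn.mono (Set.prod_mono subset_rfl sphere_subset_closedBall)) (Iic j)
  refine continuousOn_pi.2 fun i => continuousOn_pi.2 fun j => ?_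
  exact continuousOn_circleDividedDiff hr
    (f := fun yv z => circleDividedDiff y r (fun w => A (z, w)) yv (Iic j))
    ((hinner j).mono (Set.prod_mono subset_rfl sphere_subset_closedBall)) (Iic i)

end CircleDividedDiffMatrix

theorem stmt_17_general (k : ℕ) (A : ℂ × ℂ → ℂ) (x y : ℂ)
    (U V : Set ℂ) (hxU : x ∈ U) (hyV : y ∈ V)
    (hA : ∀ p ∈ U ×ˢ V, AnalyticAt ℂ A p) :
    Filter.Tendsto
      (fun p : (Fin k → ℂ) × (Fin k → ℂ) =>
        Matrix.det (Matrix.of fun i j : Fin k => A (p.1 i, p.2 j)) /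
          (vandermondeC p.1 * vandermondeC p.2))
      (nhdsWithin ((fun _ => x), (fun _ => y))
        {p : (Fin k → ℂ) × (Fin k → ℂ) | Function.Injective p.1 ∧ Function.Injective p.2})
      (nhds ((∏ j : Fin k, (((j : ℕ).factorial : ℂ) ^ 2)⁻¹) *
        Matrix.det (Matrix.of fun i j : Fin k =>
          iteratedDeriv (i : ℕ) (fun a => iteratedDeriv (j : ℕ) (fun b => A (a, b)) y) x))) := by
  obtain ⟨r, hr, hAr⟩ : ∃ r > 0, AnalyticOnNhd ℂ A (closedBall x r ×ˢ closedBall y r) := by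
    obtain ⟨r, hr, hball⟩ := nhds_basis_closedBall.mem_iff.mp
      (hA (x, y) ⟨hxU, hyV⟩).eventually_analyticAt
    exact ⟨r, hr, by rwa [closedBall_prod_same]⟩
  have hΩ : (Set.univ.pi fun _ : Fin k => ball x r) ×ˢ (Set.univ.pi fun _ : Fin k => ball y r) ∈
      𝓝 ((fun _ => x), (fun _ => y)) :=
    prod_mem_nhds (set_pi_mem_nhds Set.finite_univ fun _ _ => ball_mem_nhds x hr)
      (set_pi_mem_nhds Set.finite_univ fun _ _ => ball_mem_nhds y hr)
  have hdet : Tendsto (fun p => (circleDividedDiffMatrix A x y r p).det)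
      (𝓝[{p | Function.Injective p.1 ∧ Function.Injective p.2}] _) (𝓝 _) :=
    (continuous_id.matrix_det.continuousAt.comp
      ((continuousOn_circleDividedDiffMatrix hAr hr.le).continuousAt hΩ)).tendsto.mono_left
        nhdsWithin_le_nhds
  rw [← det_circleDividedDiffMatrix_const hAr hr]
  refine hdet.congr' ?_
  filter_upwards [self_mem_nhdsWithin, mem_nhdsWithin_of_mem_nhds hΩ] with p hinj hp
  rw [circleDividedDiffMatrix_eq_mul hAr hp hinj.1 hinj.2, det_mul, det_mul, det_transpose,
    det_nodalWeightMatrix, det_nodalWeightMatrix, vandermondeC, vandermondeC]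
  ring

/-- the merging limit of `det{A(x_i,y_j)}/(Δ(x)Δ(y))` as the points merge
to `(x,…,x)` and `(y,…,y)` through configurations with pairwise distinct coordinates,
for `A` analytic on a product of open neighborhoods of `x` and `y`. -/
theorem stmt_17 (k : ℕ) (hk : 1 ≤ k) (A : ℂ × ℂ → ℂ) (x y : ℂ)
    (U V : Set ℂ) (hU : IsOpen U) (hV : IsOpen V) (hxU : x ∈ U) (hyV : y ∈ V)
    (hA : ∀ p ∈ U ×ˢ V, AnalyticAt ℂ A p) :
    Filter.Tendsto
      (fun p : (Fin k → ℂ) × (Fin k → ℂ) =>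
        Matrix.det (Matrix.of fun i j : Fin k => A (p.1 i, p.2 j)) /
          (vandermondeC p.1 * vandermondeC p.2))
      (nhdsWithin ((fun _ => x), (fun _ => y))
        {p : (Fin k → ℂ) × (Fin k → ℂ) | Function.Injective p.1 ∧ Function.Injective p.2})
      (nhds ((∏ j : Fin k, (((j : ℕ).factorial : ℂ) ^ 2)⁻¹) *
        Matrix.det (Matrix.of fun i j : Fin k =>
          iteratedDeriv (i : ℕ) (fun a => iteratedDeriv (j : ℕ) (fun b => A (a, b)) y) x))) :=
  stmt_17_general k A x y U V hxU hyV hA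
end
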